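/- (Inequality (16) in the proof of Theorem 2) Fix costs c_i and qualities q_i, let B ≥ 1 and ρ ∈ [0,1]. Let (O, p^OPT) be an optimal solution to the joint sequencing and pricing problem P.B (O duplicate-free, |O| ≤ B, f(O, p^OPT) ≥ f(L, p) for all duplicate-free L with |L| ≤ B and all prices p), with p^OPT_i ≥ c_i for all i and f(O, p^OPT) > 0. Then there exists a triple (𝒮, y, p) feasible for P.B.1 — y ∉ 𝒮, Π_{i∈𝒮} θ_i ≥ ρ, |𝒮| < B — such that g(𝒮 ∪ {y}, p) ≥ (1 − ρ) f(O, p^OPT); hence the optimal value of P.B.1 is at least (1 − ρ) f(O, p^OPT). -/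

import Mathlib

/-- MNL expected revenue of a finite set `S` of products, where product `i`
has revenue `α i` and preference weight `β i`. -/
noncomputable def g (α β : ℕ → ℝ) (S : Finset ℕ) : ℝ :=
  (∑ i ∈ S, α i * β i) / ((∑ i ∈ S, β i) + 1)

/-- Reachability of (0-based) position `t` of the sequence `S` under the
cascade browse model: the product of the continuation probabilities of all
earlier products. -/
noncomputable def reach (θ : ℕ → ℝ) (S : List ℕ) (t : ℕ) : ℝ :=
  ∏ j ∈ Finset.range t, θ (S.getD j 0)

/-- Expected revenue of a sequence of products `S` under the cascade browse
model combined with the MNL choice model. -/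
noncomputable def f (α β θ : ℕ → ℝ) (S : List ℕ) : ℝ :=
  (∑ t ∈ Finset.range (S.length - 1),
      reach θ S t * (1 - θ (S.getD t 0)) * g α β (S.take (t + 1)).toFinset)
    + reach θ S (S.length - 1) * g α β S.toFinset
/-- MNL expected revenue of a finite set `S` of products at prices `p`, where
product `i` has quality `q i` and cost `c i`. -/
noncomputable def gp (q c p : ℕ → ℝ) (S : Finset ℕ) : ℝ :=
  (∑ i ∈ S, (p i - c i) * Real.exp (q i - p i)) /
    ((∑ i ∈ S, Real.exp (q i - p i)) + 1)

/-- Expected revenue of a sequence of products `S` at prices `p` under the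
cascade browse model combined with the MNL choice model. -/
noncomputable def fp (q c θ p : ℕ → ℝ) (S : List ℕ) : ℝ :=
  (∑ t ∈ Finset.range (S.length - 1),
      reach θ S t * (1 - θ (S.getD t 0)) * gp q c p (S.take (t + 1)).toFinset)
    + reach θ S (S.length - 1) * gp q c p S.toFinset

/-!
Let `n` be the first position of `O` whose reachability drops below `ρ` (or the end of `O`), and
let `S ∪ {y}` be the most profitable of the first `n` prefixes of `O`; its reachability is at
least `ρ`, so it is feasible for P.B.1. A customer who stops before position `n` is offered a
prefix worth at most `g(S ∪ {y})`. A customer who gets to position `n` (probability `< ρ`) is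
offered the first `n` products together with a prefix of the suffix `O.drop n`; by subadditivity
of the MNL revenue over disjoint sets, this earns at most `g(S ∪ {y})` plus what the suffix earns
on its own, and the suffix, as a list, earns at most `f(O)` by optimality. Hence
`f(O) ≤ g(S ∪ {y}) + ρ f(O)`.
-/

open Finset

lemma g_union_le {α β : ℕ → ℝ} (hα : ∀ i, 0 ≤ α i) (hβ : ∀ i, 0 ≤ β i) {A B : Finset ℕ}
    (hd : Disjoint A B) : g α β (A ∪ B) ≤ g α β A + g α β B := by
  have hαβ : ∀ S : Finset ℕ, 0 ≤ ∑ i ∈ S, α i * β i := fun S =>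
    sum_nonneg fun i _ => mul_nonneg (hα i) (hβ i)
  have hβS : ∀ S : Finset ℕ, 0 ≤ ∑ i ∈ S, β i := fun S => sum_nonneg fun i _ => hβ i
  unfold g
  rw [sum_union hd, sum_union hd, add_div]
  gcongr <;> linarith [hβS A, hβS B, hαβ A, hαβ B]

lemma gp_union_le {q c p : ℕ → ℝ} (hp : ∀ i, c i ≤ p i) {A B : Finset ℕ}
    (hd : Disjoint A B) : gp q c p (A ∪ B) ≤ gp q c p A + gp q c p B :=
  g_union_le (fun i => sub_nonneg.2 (hp i)) (fun _ => (Real.exp_pos _).le) hd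

section Reach

variable {θ : ℕ → ℝ} {L : List ℕ}

lemma reach_nonneg (hθ : ∀ i, 0 ≤ θ i) (t : ℕ) : 0 ≤ reach θ L t :=
  prod_nonneg fun _ _ => hθ _

lemma reach_mul_one_sub (t : ℕ) :
    reach θ L t * (1 - θ (L.getD t 0)) = reach θ L t - reach θ L (t + 1) := by
  rw [reach, reach, prod_range_succ]
  ring

lemma sum_range_reach_mul_one_sub (n : ℕ) :
    ∑ t ∈ range n, reach θ L t * (1 - θ (L.getD t 0)) = 1 - reach θ L n := by
  simp only [reach_mul_one_sub]
  rw [sum_range_sub', reach, prod_range_zero]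

lemma reach_add (a b : ℕ) : reach θ L (a + b) = reach θ L a * reach θ (L.drop a) b := by
  simp only [reach, prod_range_add, List.getD_eq_getElem?_getD, List.getElem?_drop]

lemma prod_toFinset_take (hL : L.Nodup) {t : ℕ} (ht : t ≤ L.length) :
    ∏ i ∈ (L.take t).toFinset, θ i = reach θ L t := by
  rw [List.prod_toFinset θ (hL.sublist (List.take_sublist t L))]
  induction t with
  | zero => simp [reach]
  | succ t ih =>
    have ht' : t < L.length := by omega
    rw [List.take_succ_eq_append_getElem ht', List.map_append, List.prod_append, ih ht'.le]
    simp [reach, prod_range_succ, List.getD_eq_getElem?_getD, List.getElem?_eq_getElem ht']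

end Reach

/-- Expectation of `G` at the position where a cascade customer stops browsing `L`. -/
noncomputable def cascadeMean (θ : ℕ → ℝ) (L : List ℕ) (G : ℕ → ℝ) : ℝ :=
  (∑ t ∈ range (L.length - 1), reach θ L t * (1 - θ (L.getD t 0)) * G t)
    + reach θ L (L.length - 1) * G (L.length - 1)

section CascadeMean

variable {θ : ℕ → ℝ} {L : List ℕ}

lemma fp_eq_cascadeMean (q c p : ℕ → ℝ) :
    fp q c θ p L = cascadeMean θ L fun t => gp q c p (L.take (t + 1)).toFinset := by
  rw [fp, cascadeMean, List.take_of_length_le (by omega : L.length ≤ L.length - 1 + 1)]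

lemma cascadeMean_const (V : ℝ) : cascadeMean θ L (fun _ => V) = V := by
  rw [cascadeMean, ← sum_mul, sum_range_reach_mul_one_sub]
  ring

lemma cascadeMean_const_add (a : ℝ) (G : ℕ → ℝ) :
    cascadeMean θ L (fun t => a + G t) = a + cascadeMean θ L G := by
  have h := cascadeMean_const (θ := θ) (L := L) a
  simp only [cascadeMean, mul_add, sum_add_distrib] at h ⊢
  linarith

lemma cascadeMean_mono (hθ : ∀ i, 0 ≤ θ i ∧ θ i ≤ 1) {G G' : ℕ → ℝ}
    (hG : ∀ t ≤ L.length - 1, G t ≤ G' t) : cascadeMean θ L G ≤ cascadeMean θ L G' := by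
  have hr := reach_nonneg (L := L) fun i => (hθ i).1
  unfold cascadeMean
  gcongr with t ht
  · exact mul_nonneg (hr t) (sub_nonneg.2 (hθ _).2)
  · exact hG t (mem_range.1 ht).le
  · exact hr _
  · exact hG _ le_rfl

lemma cascadeMean_split (G : ℕ → ℝ) {n : ℕ} (hn : n < L.length) :
    cascadeMean θ L G = (∑ t ∈ range n, reach θ L t * (1 - θ (L.getD t 0)) * G t)
      + reach θ L n * cascadeMean θ (L.drop n) fun s => G (n + s) := by
  have hlast : L.length - 1 = n + (L.length - n - 1) := by omega
  rw [cascadeMean, cascadeMean, List.length_drop,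
    ← sum_range_add_sum_Ico _ (by omega : n ≤ L.length - 1), sum_Ico_eq_sum_range, mul_add, mul_sum,
    add_assoc, hlast, reach_add, Nat.add_sub_cancel_left,
    show L.length - n - 1 = L.length - 1 - n by omega]
  congr 2
  · refine sum_congr rfl fun s _ => ?_
    rw [reach_add, List.getD_eq_getElem?_getD, List.getD_eq_getElem?_getD, List.getElem?_drop]
    ring
  · ring

end CascadeMean

section Prefix

variable {q c θ p : ℕ → ℝ} {L : List ℕ}

lemma gp_take_add_le (hp : ∀ i, c i ≤ p i) (hL : L.Nodup) (n s : ℕ) :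
    gp q c p (L.take (n + s)).toFinset
      ≤ gp q c p (L.take n).toFinset + gp q c p ((L.drop n).take s).toFinset := by
  have hnd := hL.sublist (List.take_sublist (n + s) L)
  rw [List.take_add] at hnd ⊢
  rw [List.toFinset_append]
  exact gp_union_le hp <| List.disjoint_toFinset_iff_disjoint.2 <|
    List.disjoint_of_nodup_append hnd

lemma fp_le_of_forall_lt_length (hθ : ∀ i, 0 ≤ θ i ∧ θ i ≤ 1) (hL : L ≠ []) {V : ℝ}
    (hV : ∀ t < L.length, gp q c p (L.take (t + 1)).toFinset ≤ V) : fp q c θ p L ≤ V := by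
  have hlen : 0 < L.length := List.length_pos_iff.2 hL
  rw [fp_eq_cascadeMean, ← cascadeMean_const (θ := θ) (L := L) V]
  exact cascadeMean_mono hθ fun t ht => hV t (by omega)

lemma fp_le_add_reach_mul_fp_drop (hθ : ∀ i, 0 ≤ θ i ∧ θ i ≤ 1) (hp : ∀ i, c i ≤ p i)
    (hL : L.Nodup) {n : ℕ} (hn0 : 0 < n) (hn : n < L.length) {V : ℝ}
    (hV : ∀ t < n, gp q c p (L.take (t + 1)).toFinset ≤ V) :
    fp q c θ p L ≤ V + reach θ L n * fp q c θ p (L.drop n) := by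
  have hr := reach_nonneg (L := L) fun i => (hθ i).1
  have hprefix : reach θ L n * gp q c p (L.take n).toFinset ≤ reach θ L n * V := by
    have := hV (n - 1) (by omega)
    rw [Nat.sub_add_cancel hn0] at this
    exact mul_le_mul_of_nonneg_left this (hr n)
  rw [fp_eq_cascadeMean, cascadeMean_split _ hn]
  calc (∑ t ∈ range n,
          reach θ L t * (1 - θ (L.getD t 0)) * gp q c p (L.take (t + 1)).toFinset)
        + reach θ L n * cascadeMean θ (L.drop n) (fun s => gp q c p (L.take (n + s + 1)).toFinset)
      ≤ (∑ t ∈ range n, reach θ L t * (1 - θ (L.getD t 0)) * V)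
        + reach θ L n * cascadeMean θ (L.drop n)
            (fun s => gp q c p (L.take n).toFinset
              + gp q c p ((L.drop n).take (s + 1)).toFinset) := by
        gcongr with t ht s
        · exact mul_nonneg (hr t) (sub_nonneg.2 (hθ _).2)
        · exact hV t (mem_range.1 ht)
        · exact hr n
        · exact cascadeMean_mono hθ fun s _ => gp_take_add_le hp hL n (s + 1)
    _ = (1 - reach θ L n) * V + reach θ L n * gp q c p (L.take n).toFinset
        + reach θ L n * fp q c θ p (L.drop n) := by
        rw [← sum_mul, sum_range_reach_mul_one_sub, cascadeMean_const_add, ← fp_eq_cascadeMean]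
        ring
    _ ≤ V + reach θ L n * fp q c θ p (L.drop n) := by linarith

end Prefix

lemma exists_reach_cutoff {θ : ℕ → ℝ} {L : List ℕ} (hL : L ≠ []) {ρ : ℝ} (hρ1 : ρ ≤ 1) :
    ∃ n, 0 < n ∧ n ≤ L.length ∧ (∀ t < n, ρ ≤ reach θ L t) ∧
      (n < L.length → reach θ L n < ρ) := by
  classical
  have hex : ∃ n, reach θ L n < ρ ∨ L.length ≤ n := ⟨L.length, Or.inr le_rfl⟩
  have hspec := Nat.find_spec hex
  refine ⟨Nat.find hex, Nat.pos_of_ne_zero fun h0 => ?_, Nat.find_min' hex (Or.inr le_rfl),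
    fun t ht => not_lt.1 (not_or.1 (Nat.find_min hex ht)).1,
    fun h => hspec.resolve_right (by omega)⟩
  rw [h0] at hspec
  rcases hspec with h | h
  · simp only [reach, range_zero, prod_empty] at h
    linarith
  · exact hL (List.length_eq_zero_iff.1 (by omega))

lemma List.toFinset_take_succ {α : Type*} [DecidableEq α] {L : List α} {t : ℕ}
    (ht : t < L.length) :
    (L.take (t + 1)).toFinset = insert L[t] (L.take t).toFinset := by
  rw [List.take_succ_eq_append_getElem ht, List.toFinset_append, Finset.union_comm]
  rfl

lemma List.Nodup.getElem_notMem_take {α : Type*} {L : List α} (hL : L.Nodup) {t : ℕ}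
    (ht : t < L.length) : L[t] ∉ L.take t := by
  have hnd := hL.sublist (List.take_sublist (t + 1) L)
  rw [List.take_succ_eq_append_getElem ht] at hnd
  exact fun h => List.disjoint_of_nodup_append hnd h (List.mem_singleton_self _)

theorem stmt17_general (q c θ : ℕ → ℝ) (hθ : ∀ i, 0 ≤ θ i ∧ θ i ≤ 1)
    (B : ℕ) (ρ : ℝ) (hρ0 : 0 ≤ ρ) (hρ1 : ρ ≤ 1)
    (O : List ℕ) (pOPT : ℕ → ℝ) (hO : O.Nodup) (hOB : O.length ≤ B)
    (hp : ∀ i, c i ≤ pOPT i)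
    (hopt : ∀ (L : List ℕ) (p : ℕ → ℝ), L.Nodup → L.length ≤ B →
        fp q c θ p L ≤ fp q c θ pOPT O)
    (hfO : 0 < fp q c θ pOPT O) :
    ∃ (S : Finset ℕ) (y : ℕ) (p : ℕ → ℝ), y ∉ S ∧ ρ ≤ ∏ i ∈ S, θ i ∧
      S.card < B ∧
      (1 - ρ) * fp q c θ pOPT O ≤ gp q c p (insert y S) := by
  have hO0 : O ≠ [] := by rintro rfl; simp [fp, reach, gp] at hfO
  obtain ⟨n, hn0, hnO, hreach, hcut⟩ := exists_reach_cutoff (θ := θ) hO0 hρ1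
  obtain ⟨t, ht, hmax⟩ := (range n).exists_max_image
    (fun t => gp q c pOPT (O.take (t + 1)).toFinset) (nonempty_range_iff.2 hn0.ne')
  rw [mem_range] at ht
  have hbest : ∀ s < n, gp q c pOPT (O.take (s + 1)).toFinset
      ≤ gp q c pOPT (O.take (t + 1)).toFinset := fun s hs => hmax s (mem_range.2 hs)
  have hbound : fp q c θ pOPT O
      ≤ gp q c pOPT (O.take (t + 1)).toFinset + ρ * fp q c θ pOPT O := by
    rcases hnO.lt_or_eq with hlt | rfl
    · have htail : fp q c θ pOPT (O.drop n) ≤ fp q c θ pOPT O :=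
        hopt _ _ (hO.sublist (List.drop_sublist _ _))
          ((List.drop_sublist _ _).length_le.trans hOB)
      have hsplit := fp_le_add_reach_mul_fp_drop hθ hp hO hn0 hlt hbest
      have hreach_n : 0 ≤ reach θ O n := reach_nonneg (fun i => (hθ i).1) n
      linarith [mul_le_mul_of_nonneg_left htail hreach_n,
        mul_le_mul_of_nonneg_right (hcut hlt).le hfO.le]
    · linarith [fp_le_of_forall_lt_length hθ hO0 hbest, mul_nonneg hρ0 hfO.le]
  have htO : t < O.length := by omega
  refine ⟨(O.take t).toFinset, O[t], pOPT, List.mem_toFinset.not.2 (hO.getElem_notMem_take htO),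
    ?_, ?_, ?_⟩
  · rw [prod_toFinset_take hO htO.le]
    exact hreach t ht
  · rw [List.toFinset_card_of_nodup (hO.sublist (List.take_sublist _ _)), List.length_take]
    omega
  · rw [← List.toFinset_take_succ htO]
    linarith

/-- inequality (16) in the proof of Theorem 2: the optimal
value of P.B.1 is at least `(1 - ρ) f(O, p^OPT)`. -/
theorem stmt17 (q c θ : ℕ → ℝ) (hθ : ∀ i, 0 ≤ θ i ∧ θ i ≤ 1)
    (B : ℕ) (hB : 1 ≤ B) (ρ : ℝ) (hρ0 : 0 ≤ ρ) (hρ1 : ρ ≤ 1)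
    (O : List ℕ) (pOPT : ℕ → ℝ) (hO : O.Nodup) (hOB : O.length ≤ B)
    (hp : ∀ i, c i ≤ pOPT i)
    (hopt : ∀ (L : List ℕ) (p : ℕ → ℝ), L.Nodup → L.length ≤ B →
        fp q c θ p L ≤ fp q c θ pOPT O)
    (hfO : 0 < fp q c θ pOPT O) :
    ∃ (S : Finset ℕ) (y : ℕ) (p : ℕ → ℝ), y ∉ S ∧ ρ ≤ ∏ i ∈ S, θ i ∧
      S.card < B ∧
      (1 - ρ) * fp q c θ pOPT O ≤ gp q c p (insert y S) :=
  stmt17_general q c θ hθ B ρ hρ0 hρ1 O pOPT hO hOB hp hopt hfO
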